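/- arXiv:2506.08347 — 2 statements merged into one kernel-verified Lean document; each statement's English description precedes it below -/
import Mathlib

section
/- For α > 1 and a,b > 0, the function f(a,b) = a^α · b^{1−α} is jointly convex on (0,∞) × (0,∞). -/
open Real

/-- Tangent-line inequality: for `α > 1` and positive `a, b, y`,
`α * y^(α-1) * a + (1-α) * y^α * b ≤ a^α * b^(1-α)`. -/
lemma tangent_le_rpow_mul_rpow (α : ℝ) (hα : 1 < α) {a b y : ℝ}
    (ha : 0 < a) (hb : 0 < b) (hy : 0 < y) :
    α * y ^ (α - 1) * a + (1 - α) * y ^ α * b ≤ a ^ α * b ^ (1 - α) := by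
  set x : ℝ := a / b with hx
  have hxpos : 0 < x := div_pos ha hb
  -- Bernoulli at s = x/y - 1
  have hB := one_add_mul_self_le_rpow_one_add (s := x / y - 1)
      (by nlinarith [div_pos hxpos hy]) hα.le
  rw [add_sub_cancel] at hB
  -- multiply by y^α
  have hyα : (0:ℝ) < y ^ α := rpow_pos_of_pos hy α
  have h1 : (x / y) ^ α * y ^ α = x ^ α := by
    rw [div_rpow hxpos.le hy.le, div_mul_cancel₀]
    exact hyα.ne'
  have h2 : y ^ (α - 1) = y ^ α / y := by
    rw [rpow_sub hy, rpow_one]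
  have hkey : α * y ^ (α - 1) * x + (1 - α) * y ^ α ≤ x ^ α := by
    have hm := mul_le_mul_of_nonneg_right hB hyα.le
    rw [h1] at hm
    calc α * y ^ (α - 1) * x + (1 - α) * y ^ α
        = (1 + α * (x / y - 1)) * y ^ α := by
          rw [h2]; field_simp; ring
      _ ≤ x ^ α := hm
  -- multiply by b
  have hb1α : a ^ α * b ^ (1 - α) = x ^ α * b := by
    rw [hx, div_rpow ha.le hb.le, rpow_sub hb, rpow_one]
    field_simp
  have hxa : x * b = a := div_mul_cancel₀ a hb.ne'
  rw [hb1α]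
  calc α * y ^ (α - 1) * a + (1 - α) * y ^ α * b
      = (α * y ^ (α - 1) * x + (1 - α) * y ^ α) * b := by rw [← hxa]; ring
    _ ≤ x ^ α * b := mul_le_mul_of_nonneg_right hkey hb.le

/-- for `α > 1`, `(a,b) ↦ a^α · b^{1−α}` is jointly convex on `(0,∞)²`. -/
theorem rpow_mul_rpow_jointly_convex (α : ℝ) (hα : 1 < α) :
    ConvexOn ℝ {p : ℝ × ℝ | 0 < p.1 ∧ 0 < p.2}
      (fun p : ℝ × ℝ => p.1 ^ α * p.2 ^ (1 - α)) := by
  constructor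
  · exact (convex_Ioi (0:ℝ)).prod (convex_Ioi 0)
  · rintro ⟨p1, p2⟩ ⟨hp1, hp2⟩ ⟨q1, q2⟩ ⟨hq1, hq2⟩ t s ht hs hts
    simp only [Prod.smul_mk, Prod.mk_add_mk, smul_eq_mul] at *
    set c : ℝ := t * p1 + s * q1 with hc
    set d : ℝ := t * p2 + s * q2 with hd
    have hcpos : 0 < c := by
      rcases ht.lt_or_eq with h | h
      · positivity
      · have hs1 : s = 1 := by linarith
        simp [hc, ← h, hs1, hq1]
    have hdpos : 0 < d := by
      rcases ht.lt_or_eq with h | h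
      · positivity
      · have hs1 : s = 1 := by linarith
        simp [hd, ← h, hs1, hq2]
    set y : ℝ := c / d with hy
    have hypos : 0 < y := div_pos hcpos hdpos
    have hdα : (0:ℝ) < d ^ (α - 1) := rpow_pos_of_pos hdpos _
    have hdα' : (0:ℝ) < d ^ α := rpow_pos_of_pos hdpos _
    -- equality at the combination point
    have h1 : y ^ (α - 1) * c = c ^ α * d ^ (1 - α) := by
      rw [hy, div_rpow hcpos.le hdpos.le, div_mul_eq_mul_div, div_eq_iff hdα.ne']
      have e1 : c ^ (α - 1) * c = c ^ α := by
        rw [← rpow_add_one hcpos.ne', sub_add_cancel]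
      have e2 : d ^ (1 - α) * d ^ (α - 1) = 1 := by
        rw [← rpow_add hdpos]
        norm_num
      rw [e1, mul_assoc, e2, mul_one]
    have h2 : y ^ α * d = c ^ α * d ^ (1 - α) := by
      rw [hy, div_rpow hcpos.le hdpos.le, div_mul_eq_mul_div, div_eq_iff hdα'.ne']
      have e3 : d ^ (1 - α) * d ^ α = d := by
        rw [← rpow_add hdpos]
        norm_num
      rw [mul_assoc, e3]
    have heq : c ^ α * d ^ (1 - α) = α * y ^ (α - 1) * c + (1 - α) * y ^ α * d := by
      calc c ^ α * d ^ (1 - α)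
          = α * (y ^ (α - 1) * c) + (1 - α) * (y ^ α * d) := by
            rw [h1, h2]; ring
        _ = α * y ^ (α - 1) * c + (1 - α) * y ^ α * d := by ring
    rw [heq]
    have hP := tangent_le_rpow_mul_rpow α hα hp1 hp2 hypos
    have hQ := tangent_le_rpow_mul_rpow α hα hq1 hq2 hypos
    calc α * y ^ (α - 1) * c + (1 - α) * y ^ α * d
        = t * (α * y ^ (α - 1) * p1 + (1 - α) * y ^ α * p2)
          + s * (α * y ^ (α - 1) * q1 + (1 - α) * y ^ α * q2) := by
          rw [hc, hd]; ring
      _ ≤ t * (p1 ^ α * p2 ^ (1 - α)) + s * (q1 ^ α * q2 ^ (1 - α)) := by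
          gcongr
end

section
/- For α > 1, σ > 0, c ∈ ℝ, and q ∈ [0,1], let P = (1−q)·N(0,σ²) + q·N(c,σ²) and Q = N(0,σ²) be measures on ℝ. Then Ψ_α(Q‖P) ≤ Ψ_α(P‖Q), where Ψ_α(P‖Q) = ∫ p(x)^α q(x)^{1−α} dx with p, q the densities. -/
/-!
The reflection `x ↦ c - x` preserves Lebesgue measure and swaps `N(0,σ²)` and `N(c,σ²)`, so it
suffices to compare the symmetrised integrands: for `a, b > 0`, `p = (1-q)a + qb`, `r = (1-q)b + qa`,
`a^α p^(1-α) + b^α r^(1-α) ≤ p^α a^(1-α) + r^α b^(1-α)`.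
For `a ≤ b` put `δ = q(b - a)`; then `p = a + δ`, `b = r + δ` and `a ≤ r`, and the inequality says
that `s ↦ s φ(1 + δ/s)` is antitone, where `φ x = x^α - x^(1-α)`. Since `φ` is convex on `[1, ∞)`
with `φ 1 = 0`, this is the monotonicity of the secant slopes of `φ` at `1`.
-/

open Real

/-- Gaussian density on ℝ with mean `μ` and variance `σ²`. -/
noncomputable def gaussDens (μ σ : ℝ) (x : ℝ) : ℝ :=
  (σ * Real.sqrt (2 * Real.pi))⁻¹ * Real.exp (-(x - μ) ^ 2 / (2 * σ ^ 2))

open Set MeasureTheory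

lemma convexOn_rpow_sub_rpow_one_sub {α : ℝ} (hα : 1 < α) :
    ConvexOn ℝ (Ici 1) fun x : ℝ => x ^ α - x ^ (1 - α) := by
  have hne : ∀ x ∈ interior (Ici (1 : ℝ)), x ≠ 0 := fun x hx => by
    rw [interior_Ici, mem_Ioi] at hx; positivity
  refine convexOn_of_hasDerivWithinAt2_nonneg (convex_Ici 1)
    (f' := fun x => α * x ^ (α - 1) - (1 - α) * x ^ (1 - α - 1))
    (f'' := fun x => α * (α - 1) * x ^ (α - 1 - 1) - (1 - α) * (1 - α - 1) * x ^ (1 - α - 1 - 1))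
    ?_ (fun x hx => ?_) (fun x hx => ?_) (fun x hx => ?_)
  · exact (continuousOn_id.rpow_const fun x hx => Or.inl (by simp at hx; positivity)).sub
      (continuousOn_id.rpow_const fun x hx => Or.inl (by simp at hx; positivity))
  · exact ((hasDerivAt_rpow_const (Or.inl (hne x hx))).sub
      (hasDerivAt_rpow_const (Or.inl (hne x hx)))).hasDerivWithinAt
  · exact ((((hasDerivAt_rpow_const (Or.inl (hne x hx))).const_mul α).sub
      ((hasDerivAt_rpow_const (Or.inl (hne x hx))).const_mul
        (1 - α))).hasDerivWithinAt).congr_deriv (by ring)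
  · rw [interior_Ici, mem_Ioi] at hx
    have hpow : x ^ (1 - α - 1 - 1) ≤ x ^ (α - 1 - 1) :=
      rpow_le_rpow_of_exponent_le hx.le (by linarith)
    have hαα : 0 ≤ α * (α - 1) := by nlinarith
    nlinarith [mul_le_mul_of_nonneg_left hpow hαα]

lemma mul_rpow_one_add_div_sub {α s δ : ℝ} (hs : 0 < s) (hδ : 0 ≤ δ) :
    s * ((1 + δ / s) ^ α - (1 + δ / s) ^ (1 - α))
      = (s + δ) ^ α * s ^ (1 - α) - s ^ α * (s + δ) ^ (1 - α) := by
  have hsδ : 0 ≤ s + δ := by linarith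
  rw [show 1 + δ / s = (s + δ) / s by field_simp, div_rpow hsδ hs.le, div_rpow hsδ hs.le,
    rpow_sub hs, rpow_one]
  have : 0 < s ^ α := rpow_pos_of_pos hs α
  field_simp

lemma antitoneOn_add_rpow_mul_rpow_sub {α δ : ℝ} (hα : 1 < α) (hδ : 0 ≤ δ) :
    AntitoneOn (fun s => (s + δ) ^ α * s ^ (1 - α) - s ^ α * (s + δ) ^ (1 - α)) (Ioi 0) := by
  intro a ha r hr har
  simp only [mem_Ioi] at ha hr
  rcases hδ.eq_or_lt with rfl | hδ
  · simp
  dsimp only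
  rw [← mul_rpow_one_add_div_sub hr hδ.le, ← mul_rpow_one_add_div_sub ha hδ.le]
  have hδr : 0 < δ / r := by positivity
  have hδa : 0 < δ / a := by positivity
  have hslope := (convexOn_rpow_sub_rpow_one_sub hα).secant_mono (a := 1) (x := 1 + δ / r)
    (y := 1 + δ / a) (mem_Ici.2 le_rfl) (mem_Ici.2 (by linarith)) (mem_Ici.2 (by linarith))
    (ne_of_gt (by linarith)) (ne_of_gt (by linarith)) (by gcongr)
  simp only [one_rpow, sub_self, sub_zero, add_sub_cancel_left, div_div_eq_mul_div] at hslope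
  rw [div_le_div_iff_of_pos_right hδ] at hslope
  linarith

lemma rpow_mul_mix_rpow_add_swap_le {α q a b : ℝ} (hα : 1 < α) (hq0 : 0 ≤ q) (hq1 : q ≤ 1)
    (ha : 0 < a) (hb : 0 < b) :
    a ^ α * ((1 - q) * a + q * b) ^ (1 - α) + b ^ α * ((1 - q) * b + q * a) ^ (1 - α)
      ≤ ((1 - q) * a + q * b) ^ α * a ^ (1 - α) + ((1 - q) * b + q * a) ^ α * b ^ (1 - α) := by
  wlog hab : a ≤ b generalizing a b
  · linarith [this hb ha (le_of_not_ge hab)]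
  have key := antitoneOn_add_rpow_mul_rpow_sub hα (mul_nonneg hq0 (sub_nonneg.2 hab))
    (show a ∈ Ioi 0 from ha) (show (1 - q) * b + q * a ∈ Ioi 0 by simp only [mem_Ioi]; nlinarith)
    (by nlinarith)
  dsimp only at key
  rw [show a + q * (b - a) = (1 - q) * a + q * b by ring,
    show (1 - q) * b + q * a + q * (b - a) = b by ring] at key
  linarith

lemma rpow_le_rpow_add_rpow_of_mem_uIcc {a b x : ℝ} (ha : 0 < a) (hb : 0 < b)
    (hx : x ∈ uIcc a b) (γ : ℝ) : x ^ γ ≤ a ^ γ + b ^ γ := by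
  wlog hab : a ≤ b generalizing a b
  · rw [add_comm]
    exact this hb ha (uIcc_comm a b ▸ hx) (le_of_not_ge hab)
  rw [uIcc_of_le hab] at hx
  obtain ⟨hax, hxb⟩ := hx
  rcases le_total 0 γ with hγ | hγ
  · exact (rpow_le_rpow (ha.le.trans hax) hxb hγ).trans (le_add_of_nonneg_left (by positivity))
  · exact (rpow_le_rpow_of_nonpos ha hax hγ).trans (le_add_of_nonneg_right (by positivity))

lemma MeasureTheory.Integrable.rpow_mul_of_mem_uIcc {X : Type*} [MeasurableSpace X] {μ : Measure X}
    {f g m h : X → ℝ} {γ : ℝ} (hf : ∀ x, 0 < f x) (hg : ∀ x, 0 < g x)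
    (hm : ∀ x, m x ∈ uIcc (f x) (g x)) (hh : ∀ x, 0 ≤ h x)
    (hfi : Integrable (fun x => f x ^ γ * h x) μ) (hgi : Integrable (fun x => g x ^ γ * h x) μ)
    (hmeas : AEStronglyMeasurable (fun x => m x ^ γ * h x) μ) :
    Integrable (fun x => m x ^ γ * h x) μ := by
  refine (hfi.add hgi).mono' hmeas (ae_of_all _ fun x => ?_)
  have hm0 : 0 < m x := (lt_min (hf x) (hg x)).trans_le (hm x).1
  rw [Pi.add_apply, norm_of_nonneg (by have := hh x; positivity), ← add_mul]
  exact mul_le_mul_of_nonneg_right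
    (rpow_le_rpow_add_rpow_of_mem_uIcc (hf x) (hg x) (hm x) γ) (hh x)

lemma gaussDens_pos {σ : ℝ} (hσ : 0 < σ) (μ x : ℝ) : 0 < gaussDens μ σ x := by
  unfold gaussDens
  positivity

lemma integrable_gaussDens_rpow_mul_rpow {σ : ℝ} (hσ : 0 < σ) (μ₁ μ₂ : ℝ) {β γ : ℝ}
    (hβγ : β + γ = 1) : Integrable (fun x => gaussDens μ₁ σ x ^ β * gaussDens μ₂ σ x ^ γ) := by
  set A : ℝ := (σ * √(2 * π))⁻¹
  have hA : 0 < A := by positivity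
  set d : ℝ := β * μ₁ + γ * μ₂
  -- completing the square, using `β + γ = 1`
  set C : ℝ := (β * μ₁ ^ 2 + γ * μ₂ ^ 2 - d ^ 2) / (2 * σ ^ 2)
  have h : (fun x => gaussDens μ₁ σ x ^ β * gaussDens μ₂ σ x ^ γ)
      = fun x => (A * exp (-C)) * exp (-(1 / (2 * σ ^ 2)) * (x - d) ^ 2) := by
    funext x
    unfold gaussDens
    rw [mul_rpow hA.le (exp_pos _).le, mul_rpow hA.le (exp_pos _).le, ← exp_mul, ← exp_mul,
      mul_mul_mul_comm, ← rpow_add hA, hβγ, rpow_one, mul_assoc, ← exp_add, ← exp_add]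
    congr 2
    have hγ : γ = 1 - β := by linarith
    subst hγ
    simp only [C, d]
    field_simp
    ring
  rw [h]
  exact ((integrable_exp_neg_mul_sq (by positivity)).comp_sub_right d).const_mul _

lemma integrable_mix_rpow_mul_gaussDens_rpow {σ q : ℝ} (hσ : 0 < σ) (hq0 : 0 ≤ q) (hq1 : q ≤ 1)
    (μ₁ μ₂ : ℝ) {β γ : ℝ} (hβγ : β + γ = 1) :
    Integrable (fun x =>
      ((1 - q) * gaussDens μ₁ σ x + q * gaussDens μ₂ σ x) ^ β * gaussDens μ₁ σ x ^ γ) :=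
  Integrable.rpow_mul_of_mem_uIcc (gaussDens_pos hσ μ₁) (gaussDens_pos hσ μ₂)
    (fun x => segment_eq_uIcc (gaussDens μ₁ σ x) (gaussDens μ₂ σ x) ▸
      ⟨1 - q, q, sub_nonneg.2 hq1, hq0, sub_add_cancel 1 q, rfl⟩)
    (fun x => (rpow_pos_of_pos (gaussDens_pos hσ μ₁ x) γ).le)
    (integrable_gaussDens_rpow_mul_rpow hσ μ₁ μ₁ hβγ)
    (integrable_gaussDens_rpow_mul_rpow hσ μ₂ μ₁ hβγ)
    (by unfold gaussDens; fun_prop : Measurable _).aestronglyMeasurable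

lemma gaussDens_sub_left (μ σ c x : ℝ) : gaussDens μ σ (c - x) = gaussDens (c - μ) σ x := by
  unfold gaussDens
  ring_nf

lemma integral_gaussDens_le_of_add_swap_le {σ c : ℝ} {F G : ℝ → ℝ → ℝ}
    (hF : ∀ μ₁ μ₂, Integrable fun x => F (gaussDens μ₁ σ x) (gaussDens μ₂ σ x))
    (hG : ∀ μ₁ μ₂, Integrable fun x => G (gaussDens μ₁ σ x) (gaussDens μ₂ σ x))
    (hFG : ∀ μ₁ μ₂ x,
      F (gaussDens μ₁ σ x) (gaussDens μ₂ σ x) + F (gaussDens μ₂ σ x) (gaussDens μ₁ σ x)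
        ≤ G (gaussDens μ₁ σ x) (gaussDens μ₂ σ x) + G (gaussDens μ₂ σ x) (gaussDens μ₁ σ x)) :
    ∫ x, F (gaussDens 0 σ x) (gaussDens c σ x) ≤ ∫ x, G (gaussDens 0 σ x) (gaussDens c σ x) := by
  have swap : ∀ H : ℝ → ℝ → ℝ, ∫ x, H (gaussDens c σ x) (gaussDens 0 σ x)
      = ∫ x, H (gaussDens 0 σ x) (gaussDens c σ x) := fun H => by
    rw [← integral_sub_left_eq_self _ volume c]
    simp only [gaussDens_sub_left, sub_zero, sub_self]
  have hsum := integral_mono ((hF 0 c).add (hF c 0)) ((hG 0 c).add (hG c 0)) (hFG 0 c)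
  rw [integral_add' (hF 0 c) (hF c 0), integral_add' (hG 0 c) (hG c 0), swap F, swap G] at hsum
  linarith

/-- for the mixture `P = (1−q)N(0,σ²) + qN(c,σ²)` and `Q = N(0,σ²)`,
`Ψ_α(Q‖P) ≤ Ψ_α(P‖Q)` where `Ψ_α(P‖Q) = ∫ p(x)^α q(x)^{1−α} dx`. -/
theorem mixture_gaussian_renyi_ordering (α σ c : ℝ) (hα : 1 < α) (hσ : 0 < σ)
    (q : ℝ) (hq : q ∈ Set.Icc (0:ℝ) 1) :
    (∫ x : ℝ, (gaussDens 0 σ x) ^ α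
        * ((1 - q) * gaussDens 0 σ x + q * gaussDens c σ x) ^ (1 - α))
      ≤ ∫ x : ℝ, ((1 - q) * gaussDens 0 σ x + q * gaussDens c σ x) ^ α
        * (gaussDens 0 σ x) ^ (1 - α) := by
  obtain ⟨hq0, hq1⟩ := hq
  exact integral_gaussDens_le_of_add_swap_le
    (F := fun a b => a ^ α * ((1 - q) * a + q * b) ^ (1 - α))
    (G := fun a b => ((1 - q) * a + q * b) ^ α * a ^ (1 - α))
    (fun μ₁ μ₂ => (integrable_mix_rpow_mul_gaussDens_rpow hσ hq0 hq1 μ₁ μ₂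
      (sub_add_cancel 1 α)).congr (ae_of_all _ fun x => mul_comm _ _))
    (fun μ₁ μ₂ => integrable_mix_rpow_mul_gaussDens_rpow hσ hq0 hq1 μ₁ μ₂ (add_sub_cancel α 1))
    (fun μ₁ μ₂ x =>
      rpow_mul_mix_rpow_add_swap_le hα hq0 hq1 (gaussDens_pos hσ μ₁ x) (gaussDens_pos hσ μ₂ x))
end
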